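/- arXiv:2509.07565 — 3 statements merged into one kernel-verified Lean document; each statement's English description precedes it below -/
import Mathlib

section
/- Case (ii) of the characterization of the gH-derivative: suppose the right-sided derivatives dL⁺ = lim_{t→0⁺} γL(t) and dU⁺ = lim_{t→0⁺} γU(t) exist, that γL and γU are left complementary at 0 with values {kL, kU} where kL < kU, and that min(dL⁺, dU⁺) = kL and max(dL⁺, dU⁺) = kU. Then the interval-valued function F(x) = [fL(x), fU(x)] is gH-differentiable at x₀ with gH-derivative [kL, kU]. -/
open Filter Topology

/-- The difference quotient `γ(t) = (f(x₀+t) − f(x₀))/t`. -/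
noncomputable def gamma (f : ℝ → ℝ) (x₀ : ℝ) (t : ℝ) : ℝ :=
  (f (x₀ + t) - f x₀) / t

/-- The interval-valued function `F(x) = [fL(x), fU(x)]` is gH-differentiable at `x₀` with
gH-derivative `[a,b]` (`a ≤ b`) if `min(γL(t), γU(t)) → a` and `max(γL(t), γU(t)) → b`
as `t → 0` through `t ≠ 0`. -/
def gHDifferentiableAt (fL fU : ℝ → ℝ) (x₀ a b : ℝ) : Prop :=
  a ≤ b ∧
  Tendsto (fun t => min (gamma fL x₀ t) (gamma fU x₀ t)) (𝓝[≠] (0 : ℝ)) (𝓝 a) ∧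
  Tendsto (fun t => max (gamma fL x₀ t) (gamma fU x₀ t)) (𝓝[≠] (0 : ℝ)) (𝓝 b)

/-- `γL, γU` are left complementary at `0` with values `{kL, kU}`, `kL < kU`:
the sets of left cluster values of `γL` and `γU` at `0` both equal `{kL, kU}`, and
`min(γL(t), γU(t)) → kL`, `max(γL(t), γU(t)) → kU` as `t → 0⁻`. -/
def LeftComplementary (γL γU : ℝ → ℝ) (kL kU : ℝ) : Prop :=
  kL < kU ∧
  {c : ℝ | MapClusterPt c (𝓝[<] (0 : ℝ)) γL} = {kL, kU} ∧
  {c : ℝ | MapClusterPt c (𝓝[<] (0 : ℝ)) γU} = {kL, kU} ∧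
  Tendsto (fun t => min (γL t) (γU t)) (𝓝[<] (0 : ℝ)) (𝓝 kL) ∧
  Tendsto (fun t => max (γL t) (γU t)) (𝓝[<] (0 : ℝ)) (𝓝 kU)

/-- `γL, γU` are right complementary at `0` with values `{kL, kU}`, `kL < kU`. -/
def RightComplementary (γL γU : ℝ → ℝ) (kL kU : ℝ) : Prop :=
  kL < kU ∧
  {c : ℝ | MapClusterPt c (𝓝[>] (0 : ℝ)) γL} = {kL, kU} ∧
  {c : ℝ | MapClusterPt c (𝓝[>] (0 : ℝ)) γU} = {kL, kU} ∧
  Tendsto (fun t => min (γL t) (γU t)) (𝓝[>] (0 : ℝ)) (𝓝 kL) ∧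
  Tendsto (fun t => max (γL t) (γU t)) (𝓝[>] (0 : ℝ)) (𝓝 kU)

/-
On the right of `0` the difference quotients converge, so their min and max converge to
`min(dL⁺, dU⁺) = kL` and `max(dL⁺, dU⁺) = kU`; on the left this is part of left
complementarity. The two one-sided limits glue to the limit over the punctured neighbourhood.
-/

theorem Filter.Tendsto.nhdsNE_of_nhdsLT_of_nhdsGT {α β : Type*} [TopologicalSpace α]
    [LinearOrder α] {f : α → β} {a : α} {l : Filter β} (hlt : Tendsto f (𝓝[<] a) l)
    (hgt : Tendsto f (𝓝[>] a) l) : Tendsto f (𝓝[≠] a) l := by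
  rw [← nhdsLT_sup_nhdsGT]
  exact hlt.sup hgt

theorem gHDifferentiableAt_of_nhdsLT_of_nhdsGT {fL fU : ℝ → ℝ} {x₀ a b : ℝ} (hab : a ≤ b)
    (hminLT : Tendsto (fun t => min (gamma fL x₀ t) (gamma fU x₀ t)) (𝓝[<] 0) (𝓝 a))
    (hmaxLT : Tendsto (fun t => max (gamma fL x₀ t) (gamma fU x₀ t)) (𝓝[<] 0) (𝓝 b))
    (hminGT : Tendsto (fun t => min (gamma fL x₀ t) (gamma fU x₀ t)) (𝓝[>] 0) (𝓝 a))
    (hmaxGT : Tendsto (fun t => max (gamma fL x₀ t) (gamma fU x₀ t)) (𝓝[>] 0) (𝓝 b)) :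
    gHDifferentiableAt fL fU x₀ a b :=
  ⟨hab, hminLT.nhdsNE_of_nhdsLT_of_nhdsGT hminGT, hmaxLT.nhdsNE_of_nhdsLT_of_nhdsGT hmaxGT⟩

theorem gH_differentiable_case_ii_general (fL fU : ℝ → ℝ) (x₀ dLp dUp kL kU : ℝ)
    (hLp : Tendsto (gamma fL x₀) (𝓝[>] (0 : ℝ)) (𝓝 dLp))
    (hUp : Tendsto (gamma fU x₀) (𝓝[>] (0 : ℝ)) (𝓝 dUp))
    (hcomp : LeftComplementary (gamma fL x₀) (gamma fU x₀) kL kU)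
    (hmin : min dLp dUp = kL)
    (hmax : max dLp dUp = kU) :
    gHDifferentiableAt fL fU x₀ kL kU := by
  obtain ⟨hlt, -, -, hminLT, hmaxLT⟩ := hcomp
  subst hmin hmax
  exact gHDifferentiableAt_of_nhdsLT_of_nhdsGT hlt.le hminLT hmaxLT (hLp.min hUp) (hLp.max hUp)

/-- Case (ii) of the characterization of the gH-derivative: if the right-sided derivatives
`dL⁺, dU⁺` of `fL, fU` at `x₀` exist, `γL, γU` are left complementary at `0` with values
`{kL, kU}` (`kL < kU`), and `min(dL⁺, dU⁺) = kL`, `max(dL⁺, dU⁺) = kU`, then `F` is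
gH-differentiable at `x₀` with gH-derivative `[kL, kU]`. -/
theorem gH_differentiable_case_ii (fL fU : ℝ → ℝ) (x₀ dLp dUp kL kU : ℝ)
    (hle : ∀ x, fL x ≤ fU x)
    (hLp : Tendsto (gamma fL x₀) (𝓝[>] (0 : ℝ)) (𝓝 dLp))
    (hUp : Tendsto (gamma fU x₀) (𝓝[>] (0 : ℝ)) (𝓝 dUp))
    (hcomp : LeftComplementary (gamma fL x₀) (gamma fU x₀) kL kU)
    (hmin : min dLp dUp = kL)
    (hmax : max dLp dUp = kU) :
    gHDifferentiableAt fL fU x₀ kL kU :=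
  gH_differentiable_case_ii_general fL fU x₀ dLp dUp kL kU hLp hUp hcomp hmin hmax
end

section
/- Let fL(x) = |x| + sin x and fU(x) = |x| + sin x + (x − 4)². Then at x₀ = 0 all four one-sided derivatives exist: the right- and left-sided derivatives of fL at 0 are 2 and 0, and those of fU at 0 are −6 and −8; consequently [min(dL⁺, dU⁺), max(dL⁺, dU⁺)] = [−6, 2] ≠ [−8, 0] = [min(dL⁻, dU⁻), max(dL⁻, dU⁻)], and the interval-valued function F(x) = [fL(x), fU(x)] is NOT gH-differentiable at 0: there exist no reals a ≤ b with min(γL(t), γU(t)) → a and max(γL(t), γU(t)) → b as t → 0 through t ≠ 0. -/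
open Filter Topology

/-! The difference quotients of `sin` and `(x - 4)²` at `0` have two-sided limits `1` and `-8`,
while that of `|x|` is `1` for `t > 0` and `-1` for `t < 0`. So the lower end `min(γL, γU)`
tends to `min(0, -8) = -8` from the left but to `min(2, -6) = -6` from the right, and it cannot
have a limit through `t ≠ 0`. -/

theorem HasDerivAt.tendsto_gamma {f : ℝ → ℝ} {f' x₀ : ℝ} (h : HasDerivAt f f' x₀) :
    Tendsto (gamma f x₀) (𝓝[≠] 0) (𝓝 f') :=
  h.tendsto_slope_zero.congr fun t => by rw [gamma, smul_eq_mul, inv_mul_eq_div]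

theorem Filter.Tendsto.gamma_add {f g : ℝ → ℝ} {x₀ a b : ℝ} {l : Filter ℝ}
    (hf : Tendsto (gamma f x₀) l (𝓝 a)) (hg : Tendsto (gamma g x₀) l (𝓝 b)) :
    Tendsto (gamma (fun x => f x + g x) x₀) l (𝓝 (a + b)) :=
  (hf.add hg).congr fun t => by simp only [gamma]; ring

theorem tendsto_gamma_abs_zero_right : Tendsto (gamma (fun x => |x|) 0) (𝓝[>] 0) (𝓝 1) :=
  tendsto_const_nhds.congr' <| eventually_nhdsWithin_of_forall fun t (ht : 0 < t) => by
    simp [gamma, abs_of_pos ht, ht.ne']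

theorem tendsto_gamma_abs_zero_left : Tendsto (gamma (fun x => |x|) 0) (𝓝[<] 0) (𝓝 (-1)) :=
  tendsto_const_nhds.congr' <| eventually_nhdsWithin_of_forall fun t (ht : t < 0) => by
    simp [gamma, abs_of_neg ht, ht.ne]

theorem eq_of_tendsto_nhdsNE {f : ℝ → ℝ} {x a l r : ℝ} (h : Tendsto f (𝓝[≠] x) (𝓝 a))
    (hl : Tendsto f (𝓝[<] x) (𝓝 l)) (hr : Tendsto f (𝓝[>] x) (𝓝 r)) : l = r :=
  (tendsto_nhds_unique (h.mono_left (nhdsLT_le_nhdsNE x)) hl).symm.trans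
    (tendsto_nhds_unique (h.mono_left (nhdsGT_le_nhdsNE x)) hr)

theorem not_gHDifferentiableAt_of_one_sided {fL fU : ℝ → ℝ} {x₀ lL rL lU rU : ℝ}
    (hlL : Tendsto (gamma fL x₀) (𝓝[<] 0) (𝓝 lL)) (hrL : Tendsto (gamma fL x₀) (𝓝[>] 0) (𝓝 rL))
    (hlU : Tendsto (gamma fU x₀) (𝓝[<] 0) (𝓝 lU)) (hrU : Tendsto (gamma fU x₀) (𝓝[>] 0) (𝓝 rU))
    (hne : (min lL lU, max lL lU) ≠ (min rL rU, max rL rU)) :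
    ¬ ∃ a b, gHDifferentiableAt fL fU x₀ a b := by
  rintro ⟨a, b, -, hmin, hmax⟩
  exact hne (Prod.ext (eq_of_tendsto_nhdsNE hmin (hlL.min hlU) (hrL.min hrU))
    (eq_of_tendsto_nhdsNE hmax (hlL.max hlU) (hrL.max hrU)))

/-- For `fL(x) = |x| + sin x`, `fU(x) = |x| + sin x + (x − 4)²`: all four one-sided
derivatives at `0` exist (`dL⁺ = 2`, `dL⁻ = 0`, `dU⁺ = −6`, `dU⁻ = −8`), but
`F(x) = [fL(x), fU(x)]` is NOT gH-differentiable at `0`. -/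
theorem gH_not_differentiable_example :
    Tendsto (gamma (fun x => |x| + Real.sin x) 0) (𝓝[>] (0 : ℝ)) (𝓝 2) ∧
    Tendsto (gamma (fun x => |x| + Real.sin x) 0) (𝓝[<] (0 : ℝ)) (𝓝 0) ∧
    Tendsto (gamma (fun x => |x| + Real.sin x + (x - 4) ^ 2) 0) (𝓝[>] (0 : ℝ)) (𝓝 (-6)) ∧
    Tendsto (gamma (fun x => |x| + Real.sin x + (x - 4) ^ 2) 0) (𝓝[<] (0 : ℝ)) (𝓝 (-8)) ∧
    ¬ ∃ a b : ℝ, gHDifferentiableAt (fun x => |x| + Real.sin x)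
        (fun x => |x| + Real.sin x + (x - 4) ^ 2) 0 a b := by
  have hsin : Tendsto (gamma Real.sin 0) (𝓝[≠] 0) (𝓝 1) := by
    simpa using (Real.hasDerivAt_sin 0).tendsto_gamma
  have hsq : Tendsto (gamma (fun x => (x - 4) ^ 2) 0) (𝓝[≠] 0) (𝓝 (-8)) := by
    convert (((hasDerivAt_id' (x := (0 : ℝ))).sub_const 4).fun_pow 2).tendsto_gamma using 2
    norm_num
  have hrL : Tendsto (gamma (fun x => |x| + Real.sin x) 0) (𝓝[>] 0) (𝓝 2) := by
    convert tendsto_gamma_abs_zero_right.gamma_add (hsin.mono_left (nhdsGT_le_nhdsNE 0)) using 2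
    norm_num
  have hlL : Tendsto (gamma (fun x => |x| + Real.sin x) 0) (𝓝[<] 0) (𝓝 0) := by
    convert tendsto_gamma_abs_zero_left.gamma_add (hsin.mono_left (nhdsLT_le_nhdsNE 0)) using 2
    norm_num
  have hrU : Tendsto (gamma (fun x => |x| + Real.sin x + (x - 4) ^ 2) 0) (𝓝[>] 0)
      (𝓝 (-6)) := by
    convert hrL.gamma_add (hsq.mono_left (nhdsGT_le_nhdsNE 0)) using 2
    norm_num
  have hlU : Tendsto (gamma (fun x => |x| + Real.sin x + (x - 4) ^ 2) 0) (𝓝[<] 0)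
      (𝓝 (-8)) := by
    convert hlL.gamma_add (hsq.mono_left (nhdsLT_le_nhdsNE 0)) using 2
    norm_num
  exact ⟨hrL, hlL, hrU, hlU,
    not_gHDifferentiableAt_of_one_sided hlL hrL hlU hrU (by norm_num)⟩
end

section
/- Define fL : ℝ → ℝ by fL(x) = x for x > 0, fL(0) = 0, fL(x) = x for x < 0 rational, and fL(x) = 2x for x < 0 irrational; define fU : ℝ → ℝ by fU(x) = 2x + 1 for x > 0, fU(0) = 1, fU(x) = x² + 2x + 1 for x < 0 rational, and fU(x) = x² + x + 1 for x < 0 irrational. Then fL ≤ fU pointwise, the right-sided derivatives of fL and fU at 0 exist and equal 1 and 2 respectively, the difference quotients γL and γU are left complementary at 0 with values {1, 2} (in particular, neither fL nor fU has a left-sided derivative at 0), and the interval-valued function F(x) = [fL(x), fU(x)] is gH-differentiable at 0 with gH-derivative [1, 2]: min(γL(t), γU(t)) → 1 and max(γL(t), γU(t)) → 2 as t → 0 through t ≠ 0. -/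
open Filter Topology

open Classical in
/-- `fL(x) = x` for `x > 0`, `fL(0) = 0`, `fL(x) = x` for `x < 0` rational,
`fL(x) = 2x` for `x < 0` irrational. -/
noncomputable def fL9 : ℝ → ℝ := fun x =>
  if 0 < x then x else if x = 0 then 0 else if Irrational x then 2 * x else x

open Classical in
/-- `fU(x) = 2x + 1` for `x > 0`, `fU(0) = 1`, `fU(x) = x² + 2x + 1` for `x < 0` rational,
`fU(x) = x² + x + 1` for `x < 0` irrational. -/
noncomputable def fU9 : ℝ → ℝ := fun x =>
  if 0 < x then 2 * x + 1 else if x = 0 then 1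
  else if Irrational x then x ^ 2 + x + 1 else x ^ 2 + 2 * x + 1

/-! On the right both difference quotients are constant, equal to 1 and 2. On the left, `γL` is
2 at irrational and 1 at rational points, while `γU` is `t + 1` at irrational and `t + 2` at
rational points; so `(γL, γU)` tends to `(2, 1)` along the irrationals and to `(1, 2)` along the
rationals. Both sets accumulate at `0⁻` by density, and `𝓝[<] 0` is the supremum of its traces on
them: hence each quotient has exactly the left cluster values `{1, 2}`, while `min` and `max` tend
to 1 and 2 along both traces, hence along `𝓝[<] 0`. -/

open Set

section ClusterPoints

variable {α X : Type*} [TopologicalSpace X] [T2Space X] {f : α → X}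

theorem MapClusterPt.eq_of_tendsto {l : Filter α} {c d : X} (hc : MapClusterPt c l f)
    (hd : Tendsto f l (𝓝 d)) : c = d :=
  eq_of_nhds_neBot (hc.clusterPt.mono hd)

theorem setOf_mapClusterPt_sup_eq_pair {l₁ l₂ : Filter α} [l₁.NeBot] [l₂.NeBot] {a b : X}
    (ha : Tendsto f l₁ (𝓝 a)) (hb : Tendsto f l₂ (𝓝 b)) :
    {c | MapClusterPt c (l₁ ⊔ l₂) f} = {a, b} := by
  ext c
  change MapClusterPt c (l₁ ⊔ l₂) f ↔ c = a ∨ c = b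
  rw [mapClusterPt_def, map_sup, clusterPt_sup]
  refine ⟨Or.imp (MapClusterPt.eq_of_tendsto · ha) (MapClusterPt.eq_of_tendsto · hb), ?_⟩
  rintro (rfl | rfl)
  exacts [Or.inl ha.mapClusterPt, Or.inr hb.mapClusterPt]

theorem not_exists_tendsto_of_mapClusterPt {l : Filter α} {a b : X} (hab : a ≠ b)
    (ha : MapClusterPt a l f) (hb : MapClusterPt b l f) : ¬ ∃ d, Tendsto f l (𝓝 d) := by
  rintro ⟨d, hd⟩
  exact hab ((ha.eq_of_tendsto hd).trans (hb.eq_of_tendsto hd).symm)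

end ClusterPoints

theorem Filter.inf_principal_sup_inf_principal_compl {α : Type*} (l : Filter α) (s : Set α) :
    l ⊓ 𝓟 s ⊔ l ⊓ 𝓟 sᶜ = l := by
  rw [← inf_sup_left, sup_principal, union_compl_self, principal_univ, inf_top_eq]

theorem LeftComplementary.not_exists_tendsto {γL γU : ℝ → ℝ} {kL kU : ℝ}
    (h : LeftComplementary γL γU kL kU) :
    (¬ ∃ d, Tendsto γL (𝓝[<] 0) (𝓝 d)) ∧ ¬ ∃ d, Tendsto γU (𝓝[<] 0) (𝓝 d) := by
  obtain ⟨hlt, hL, hU, -⟩ := h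
  have mem (γ : ℝ → ℝ) (hγ : {c | MapClusterPt c (𝓝[<] 0) γ} = {kL, kU}) :
      MapClusterPt kL (𝓝[<] 0) γ ∧ MapClusterPt kU (𝓝[<] 0) γ :=
    ⟨show kL ∈ {c | MapClusterPt c (𝓝[<] 0) γ} from hγ ▸ mem_insert _ _,
      show kU ∈ {c | MapClusterPt c (𝓝[<] 0) γ} from hγ ▸ mem_insert_of_mem _ rfl⟩
  exact ⟨not_exists_tendsto_of_mapClusterPt hlt.ne (mem γL hL).1 (mem γL hL).2,
    not_exists_tendsto_of_mapClusterPt hlt.ne (mem γU hU).1 (mem γU hU).2⟩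

theorem eventually_mem_nhdsWithin_inf_principal {X : Type*} [TopologicalSpace X] (U s : Set X)
    (x : X) : ∀ᶠ t in 𝓝[U] x ⊓ 𝓟 s, t ∈ U ∧ t ∈ s :=
  Filter.inter_mem_inf self_mem_nhdsWithin (mem_principal_self s)

theorem Dense.nhdsWithin_inf_principal_neBot {X : Type*} [TopologicalSpace X] {s U : Set X}
    {x : X} (hs : Dense s) (hU : IsOpen U) (hx : x ∈ closure U) : (𝓝[U] x ⊓ 𝓟 s).NeBot := by
  rw [← nhdsWithin_inter', ← mem_closure_iff_nhdsWithin_neBot]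
  exact closure_minimal (hs.open_subset_closure_inter hU) isClosed_closure hx

theorem dense_not_irrational : Dense {x : ℝ | Irrational x}ᶜ :=
  Rat.denseRange_cast.mono <| by
    rintro _ ⟨q, rfl⟩
    exact q.not_irrational

theorem fL9_le_fU9 (x : ℝ) : fL9 x ≤ fU9 x := by
  rcases lt_trichotomy x 0 with hx | rfl | hx
  · by_cases h : Irrational x
    · simp only [fL9, fU9, if_neg hx.not_gt, if_neg hx.ne, if_pos h]
      nlinarith [sq_nonneg (x - 1)]
    · simp only [fL9, fU9, if_neg hx.not_gt, if_neg hx.ne, if_neg h]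
      nlinarith [sq_nonneg (x + 1)]
  · simp [fL9, fU9]
  · simp only [fL9, fU9, if_pos hx]
    linarith

section DifferenceQuotients

variable {t : ℝ}

theorem gamma_fL9_of_pos (ht : 0 < t) : gamma fL9 0 t = 1 := by
  simp [gamma, fL9, ht, ht.ne']

theorem gamma_fU9_of_pos (ht : 0 < t) : gamma fU9 0 t = 2 := by
  simp [gamma, fU9, ht, ht.ne']

theorem gamma_fL9_of_neg_of_irrational (ht : t < 0) (h : Irrational t) : gamma fL9 0 t = 2 := by
  simp [gamma, fL9, ht.not_gt, ht.ne, h]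

theorem gamma_fL9_of_neg_of_not_irrational (ht : t < 0) (h : ¬ Irrational t) :
    gamma fL9 0 t = 1 := by
  simp [gamma, fL9, ht.not_gt, ht.ne, h]

theorem gamma_fU9_of_neg_of_irrational (ht : t < 0) (h : Irrational t) :
    gamma fU9 0 t = t + 1 := by
  have ht0 : t ≠ 0 := ht.ne
  simp [gamma, fU9, ht.not_gt, ht0, h]
  field_simp

theorem gamma_fU9_of_neg_of_not_irrational (ht : t < 0) (h : ¬ Irrational t) :
    gamma fU9 0 t = t + 2 := by
  have ht0 : t ≠ 0 := ht.ne
  simp [gamma, fU9, ht.not_gt, ht0, h]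
  field_simp

end DifferenceQuotients

theorem tendsto_gamma_fL9_nhdsGT : Tendsto (gamma fL9 0) (𝓝[>] 0) (𝓝 1) :=
  tendsto_const_nhds.congr' <| eventually_nhdsWithin_of_forall fun _ ht ↦
    (gamma_fL9_of_pos ht).symm

theorem tendsto_gamma_fU9_nhdsGT : Tendsto (gamma fU9 0) (𝓝[>] 0) (𝓝 2) :=
  tendsto_const_nhds.congr' <| eventually_nhdsWithin_of_forall fun _ ht ↦
    (gamma_fU9_of_pos ht).symm

theorem tendsto_gamma_fL9_irrational :
    Tendsto (gamma fL9 0) (𝓝[<] 0 ⊓ 𝓟 {x | Irrational x}) (𝓝 2) :=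
  tendsto_const_nhds.congr' <| (eventually_mem_nhdsWithin_inf_principal _ _ _).mono
    fun _ ⟨ht, h⟩ ↦ (gamma_fL9_of_neg_of_irrational ht h).symm

theorem tendsto_gamma_fL9_not_irrational :
    Tendsto (gamma fL9 0) (𝓝[<] 0 ⊓ 𝓟 {x | Irrational x}ᶜ) (𝓝 1) :=
  tendsto_const_nhds.congr' <| (eventually_mem_nhdsWithin_inf_principal _ _ _).mono
    fun _ ⟨ht, h⟩ ↦ (gamma_fL9_of_neg_of_not_irrational ht h).symm

theorem tendsto_gamma_fU9_irrational :
    Tendsto (gamma fU9 0) (𝓝[<] 0 ⊓ 𝓟 {x | Irrational x}) (𝓝 1) :=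
  (((continuous_add_const (1 : ℝ)).tendsto' 0 1 (zero_add 1)).mono_left
    (inf_le_left.trans nhdsWithin_le_nhds)).congr' <|
    (eventually_mem_nhdsWithin_inf_principal _ _ _).mono fun _ ⟨ht, h⟩ ↦
      (gamma_fU9_of_neg_of_irrational ht h).symm

theorem tendsto_gamma_fU9_not_irrational :
    Tendsto (gamma fU9 0) (𝓝[<] 0 ⊓ 𝓟 {x | Irrational x}ᶜ) (𝓝 2) :=
  (((continuous_add_const (2 : ℝ)).tendsto' 0 2 (zero_add 2)).mono_left
    (inf_le_left.trans nhdsWithin_le_nhds)).congr' <|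
    (eventually_mem_nhdsWithin_inf_principal _ _ _).mono fun _ ⟨ht, h⟩ ↦
      (gamma_fU9_of_neg_of_not_irrational ht h).symm

theorem leftComplementary_gamma_fL9_gamma_fU9 :
    LeftComplementary (gamma fL9 0) (gamma fU9 0) 1 2 := by
  have hIio : (0 : ℝ) ∈ closure (Iio 0) := by simp
  have := dense_irrational.nhdsWithin_inf_principal_neBot isOpen_Iio hIio
  have := dense_not_irrational.nhdsWithin_inf_principal_neBot isOpen_Iio hIio
  rw [LeftComplementary,
    ← inf_principal_sup_inf_principal_compl (𝓝[<] (0 : ℝ)) {x | Irrational x}]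
  refine ⟨one_lt_two, ?_, ?_, tendsto_sup.2 ⟨?_, ?_⟩, tendsto_sup.2 ⟨?_, ?_⟩⟩
  · rw [setOf_mapClusterPt_sup_eq_pair tendsto_gamma_fL9_irrational
      tendsto_gamma_fL9_not_irrational, pair_comm]
  · exact setOf_mapClusterPt_sup_eq_pair tendsto_gamma_fU9_irrational
      tendsto_gamma_fU9_not_irrational
  · simpa using tendsto_gamma_fL9_irrational.min tendsto_gamma_fU9_irrational
  · simpa using tendsto_gamma_fL9_not_irrational.min tendsto_gamma_fU9_not_irrational
  · simpa using tendsto_gamma_fL9_irrational.max tendsto_gamma_fU9_irrational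
  · simpa using tendsto_gamma_fL9_not_irrational.max tendsto_gamma_fU9_not_irrational

/-- Example 3.2: `fL ≤ fU` pointwise, the right-sided derivatives of `fL, fU` at `0`
exist and equal `1, 2`, the difference quotients are left complementary at `0` with
values `{1, 2}` (in particular neither endpoint function has a left-sided derivative
at `0`), and `F = [fL, fU]` is gH-differentiable at `0` with gH-derivative `[1, 2]`. -/
theorem gH_differentiable_left_complementary_example :
    (∀ x, fL9 x ≤ fU9 x) ∧
    Tendsto (gamma fL9 0) (𝓝[>] (0 : ℝ)) (𝓝 1) ∧
    Tendsto (gamma fU9 0) (𝓝[>] (0 : ℝ)) (𝓝 2) ∧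
    LeftComplementary (gamma fL9 0) (gamma fU9 0) 1 2 ∧
    (¬ ∃ d : ℝ, Tendsto (gamma fL9 0) (𝓝[<] (0 : ℝ)) (𝓝 d)) ∧
    (¬ ∃ d : ℝ, Tendsto (gamma fU9 0) (𝓝[<] (0 : ℝ)) (𝓝 d)) ∧
    gHDifferentiableAt fL9 fU9 0 1 2 := by
  have hLeft := leftComplementary_gamma_fL9_gamma_fU9
  obtain ⟨-, -, -, hminLeft, hmaxLeft⟩ := leftComplementary_gamma_fL9_gamma_fU9
  have hL := tendsto_gamma_fL9_nhdsGT
  have hU := tendsto_gamma_fU9_nhdsGT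
  refine ⟨fL9_le_fU9, hL, hU, hLeft, hLeft.not_exists_tendsto.1, hLeft.not_exists_tendsto.2,
    one_le_two, ?_, ?_⟩
  · rw [← nhdsLT_sup_nhdsGT]
    exact tendsto_sup.2 ⟨hminLeft, by simpa using hL.min hU⟩
  · rw [← nhdsLT_sup_nhdsGT]
    exact tendsto_sup.2 ⟨hmaxLeft, by simpa using hL.max hU⟩
end
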